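/- arXiv:1402.0142 — 5 statements merged into one kernel-verified Lean document; each statement's English description precedes it below -/
import Mathlib

section
/- In a completely randomized experiment, the difference-in-means estimator τ̂ = (1/N₁)Σ_{i:T_i=1} Y_i^{obs} − (1/N₀)Σ_{i:T_i=0} Y_i^{obs} is unbiased for the finite population average causal effect: E(τ̂) = τ = (1/N)Σ_{i=1}^N {Y_i(1) − Y_i(0)}. -/
open Finset

noncomputable section

/-- Completely randomized assignments: vectors in `{0,1}^N` with exactly `N₁` ones. -/
def CRD (N N₁ : ℕ) : Finset (Fin N → Bool) :=
  Finset.univ.filter fun T => (Finset.univ.filter fun i => T i = true).card = N₁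

noncomputable def crdExp (N N₁ : ℕ) (f : (Fin N → Bool) → ℝ) : ℝ :=
  (∑ T ∈ CRD N N₁, f T) / ((CRD N N₁).card : ℝ)

/-- The difference-in-means estimator: the observed outcome is
`Yᵢobs = Tᵢ Yᵢ(1) + (1−Tᵢ) Yᵢ(0)`, and
`τ̂ = (1/N₁) Σ_{Tᵢ=1} Yᵢobs − (1/N₀) Σ_{Tᵢ=0} Yᵢobs`. -/
noncomputable def tauhat (N N₁ : ℕ) (Y1 Y0 : Fin N → ℝ) (T : Fin N → Bool) : ℝ :=
  (∑ i, if T i then Y1 i else 0) / (N₁ : ℝ)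
    - (∑ i, if T i then 0 else Y0 i) / ((N - N₁ : ℕ) : ℝ)

/-! By the symmetry of the design under permutations of the units, every unit is treated in the
same number of assignments; double counting the pairs (unit, assignment treating it) shows that
this number is `N₁ / N` of all assignments. Hence `P(Tᵢ = 1) = N₁ / N` and `P(Tᵢ = 0) = N₀ / N`,
and linearity of expectation gives `E τ̂ = Σ Yᵢ(1) / N - Σ Yᵢ(0) / N`. -/

variable {N N₁ : ℕ}

lemma comp_perm_mem_CRD_iff (σ : Equiv.Perm (Fin N)) {T : Fin N → Bool} :
    T ∘ σ ∈ CRD N N₁ ↔ T ∈ CRD N N₁ := by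
  simp only [CRD, mem_filter, mem_univ, true_and, Function.comp_apply]
  rw [card_equiv σ (t := {i | T i}) (by simp)]

lemma card_CRD_filter_apply_eq (i j : Fin N) :
    #{T ∈ CRD N N₁ | T i} = #{T ∈ CRD N N₁ | T j} := by
  refine card_equiv ((Equiv.swap i j).arrowCongr (Equiv.refl Bool)) fun T => ?_
  have hT : (Equiv.swap i j).arrowCongr (Equiv.refl Bool) T = T ∘ Equiv.swap i j := rfl
  simp [hT, comp_perm_mem_CRD_iff]

lemma sum_card_CRD_filter_apply : ∑ i, #{T ∈ CRD N N₁ | T i} = N₁ * #(CRD N N₁) := by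
  have := sum_card_bipartiteAbove_eq_sum_card_bipartiteBelow (s := univ) (t := CRD N N₁)
    (r := fun i T => T i = true)
  simp only [bipartiteAbove, bipartiteBelow] at this
  rw [this, sum_const_nat (s := CRD N N₁) (m := N₁) fun _ hT => (mem_filter.1 hT).2, mul_comm]

lemma mul_card_CRD_filter_apply (i : Fin N) :
    N * #{T ∈ CRD N N₁ | T i} = N₁ * #(CRD N N₁) := by
  simpa [card_CRD_filter_apply_eq _ i] using sum_card_CRD_filter_apply (N := N) (N₁ := N₁)

lemma CRD_nonempty (h : N₁ ≤ N) : (CRD N N₁).Nonempty :=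
  ⟨fun i => decide ((i : ℕ) < N₁), by simp [CRD, Fin.card_filter_val_lt, h]⟩

lemma crdExp_sub (f g : (Fin N → Bool) → ℝ) :
    crdExp N N₁ (fun T => f T - g T) = crdExp N N₁ f - crdExp N N₁ g := by
  simp only [crdExp, sum_sub_distrib, sub_div]

lemma crdExp_div_const (f : (Fin N → Bool) → ℝ) (c : ℝ) :
    crdExp N N₁ (fun T => f T / c) = crdExp N N₁ f / c := by
  simp only [crdExp, ← sum_div, div_right_comm]

lemma crdExp_sum {ι : Type*} (s : Finset ι) (f : ι → (Fin N → Bool) → ℝ) :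
    crdExp N N₁ (fun T => ∑ i ∈ s, f i T) = ∑ i ∈ s, crdExp N N₁ (f i) := by
  simp only [crdExp, sum_div]
  exact sum_comm

lemma crdExp_const (h : N₁ ≤ N) (c : ℝ) : crdExp N N₁ (fun _ => c) = c := by
  have : (#(CRD N N₁) : ℝ) ≠ 0 := by exact_mod_cast (CRD_nonempty h).card_ne_zero
  simp [crdExp, sum_const, this]

lemma crdExp_ite_apply_zero_right (h : N₁ ≤ N) (i : Fin N) (a : ℝ) :
    crdExp N N₁ (fun T => if T i then a else 0) = N₁ / N * a := by
  have hN : (N : ℝ) ≠ 0 := by exact_mod_cast i.pos.ne'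
  have hCRD : (#(CRD N N₁) : ℝ) ≠ 0 := by exact_mod_cast (CRD_nonempty h).card_ne_zero
  have hcount : (N : ℝ) * #{T ∈ CRD N N₁ | T i} = N₁ * #(CRD N N₁) := by
    exact_mod_cast mul_card_CRD_filter_apply i
  rw [crdExp, ← sum_filter, sum_const, nsmul_eq_mul]
  field_simp
  linear_combination a * hcount

lemma crdExp_ite_apply_zero_left (h : N₁ ≤ N) (i : Fin N) (b : ℝ) :
    crdExp N N₁ (fun T => if T i then 0 else b) = (N - N₁ : ℕ) / N * b := by
  have hN : (N : ℝ) ≠ 0 := by exact_mod_cast i.pos.ne'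
  have hsplit : (fun T : Fin N → Bool => if T i then 0 else b)
      = fun T => b - if T i then b else 0 := by
    ext T; split_ifs <;> ring
  rw [hsplit, crdExp_sub, crdExp_const h, crdExp_ite_apply_zero_right h, Nat.cast_sub h]
  field_simp

theorem stmt2_general (N N₁ : ℕ) (h1 : 1 ≤ N₁) (h2 : N₁ ≤ N - 1)
    (Y1 Y0 : Fin N → ℝ) :
    crdExp N N₁ (tauhat N N₁ Y1 Y0) = (∑ i, (Y1 i - Y0 i)) / (N : ℝ) := by
  have hN₁N : N₁ ≤ N := by omega
  have hN₁ : (N₁ : ℝ) ≠ 0 := by exact_mod_cast (by omega : N₁ ≠ 0)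
  have hN₀ : ((N - N₁ : ℕ) : ℝ) ≠ 0 := by exact_mod_cast (by omega : N - N₁ ≠ 0)
  unfold tauhat
  rw [crdExp_sub, crdExp_div_const, crdExp_div_const, crdExp_sum, crdExp_sum]
  simp only [crdExp_ite_apply_zero_right hN₁N, crdExp_ite_apply_zero_left hN₁N, sum_sub_distrib,
    ← mul_sum, sub_div]
  field_simp

/-- In a completely randomized experiment, the difference-in-means
estimator is unbiased for the average causal effect
`τ = (1/N) Σ (Yᵢ(1) − Yᵢ(0))`. -/
theorem stmt2 (N N₁ : ℕ) (hN : 2 ≤ N) (h1 : 1 ≤ N₁) (h2 : N₁ ≤ N - 1)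
    (Y1 Y0 : Fin N → ℝ) :
    crdExp N N₁ (tauhat N N₁ Y1 Y0) = (∑ i, (Y1 i - Y0 i)) / (N : ℝ) :=
  stmt2_general N N₁ h1 h2 Y1 Y0
end
end

section
/- In a completely randomized experiment with 2 ≤ N₁ ≤ N−2, the sample variance of the observed outcomes in each treatment group is unbiased for the corresponding finite population variance: for t ∈ {0,1}, E[s_t²] = S_t², where s_t² = (1/(N_t−1))Σ_{i:T_i=t}(Y_i^{obs} − Ȳ_t^{obs})², Ȳ_t^{obs} = (1/N_t)Σ_{i:T_i=t} Y_i^{obs}, and S_t² = (1/(N−1))Σ_{i=1}^N {Y_i(t) − Ȳ_t}² with Ȳ_t = (1/N)Σ_{i=1}^N Y_i(t). -/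
/-!
Writing the sample variance of a `k`-subset `s` as `∑_{i,j ∈ s} (Y i - Y j)² / (2k(k-1))` turns
its average over all `k`-subsets into a count: each ordered pair of distinct units lies in
`C(N-2, k-2)` of them, and `C(N, k) k(k-1) = C(N-2, k-2) N(N-1)`, which gives the same formula
over the whole population. The control group of a uniform `N₁`-subset design is a uniform
`(N - N₁)`-subset, so both groups reduce to this one averaging identity.
-/

open Finset

noncomputable section

/-- Sample mean of the observed outcomes in the treated group
(`Yᵢobs = Yᵢ(1)` there). -/
noncomputable def ybar1obs (N N₁ : ℕ) (Y1 : Fin N → ℝ) (T : Fin N → Bool) : ℝ :=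
  (∑ i, if T i then Y1 i else 0) / (N₁ : ℝ)

/-- Sample mean of the observed outcomes in the control group
(`Yᵢobs = Yᵢ(0)` there). -/
noncomputable def ybar0obs (N N₁ : ℕ) (Y0 : Fin N → ℝ) (T : Fin N → Bool) : ℝ :=
  (∑ i, if T i then 0 else Y0 i) / ((N - N₁ : ℕ) : ℝ)

/-- Sample variance of the observed outcomes in the treated group. -/
noncomputable def s1sq (N N₁ : ℕ) (Y1 : Fin N → ℝ) (T : Fin N → Bool) : ℝ :=
  (∑ i, if T i then (Y1 i - ybar1obs N N₁ Y1 T) ^ 2 else 0) / ((N₁ : ℝ) - 1)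

/-- Sample variance of the observed outcomes in the control group. -/
noncomputable def s0sq (N N₁ : ℕ) (Y0 : Fin N → ℝ) (T : Fin N → Bool) : ℝ :=
  (∑ i, if T i then 0 else (Y0 i - ybar0obs N N₁ Y0 T) ^ 2)
    / (((N - N₁ : ℕ) : ℝ) - 1)

def sampleVariance {ι : Type*} (s : Finset ι) (Y : ι → ℝ) : ℝ :=
  (∑ i ∈ s, (Y i - (∑ j ∈ s, Y j) / #s) ^ 2) / (#s - 1)

theorem Nat.choose_mul_mul_sub_one {n k : ℕ} (hk : 2 ≤ k) (hkn : k ≤ n) :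
    n.choose k * (k * (k - 1)) = (n - 2).choose (k - 2) * (n * (n - 1)) := by
  obtain ⟨l, rfl⟩ : ∃ l, k = l + 2 := ⟨k - 2, by omega⟩
  obtain ⟨m, rfl⟩ : ∃ m, n = m + 2 := ⟨n - 2, by omega⟩
  have h₁ : (m + 2) * (m + 1).choose (l + 1) = (m + 2).choose (l + 2) * (l + 2) :=
    Nat.add_one_mul_choose_eq _ _
  have h₂ : (m + 1) * m.choose l = (m + 1).choose (l + 1) * (l + 1) :=
    Nat.add_one_mul_choose_eq _ _
  rw [Nat.add_sub_cancel, Nat.add_sub_cancel, show l + 2 - 1 = l + 1 by omega,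
    show m + 2 - 1 = m + 1 by omega]
  symm
  linear_combination (l + 1) * h₁ + (m + 2) * h₂

section

variable {ι : Type*}

theorem sum_sum_sub_sq (s : Finset ι) (Y : ι → ℝ) :
    ∑ i ∈ s, ∑ j ∈ s, (Y i - Y j) ^ 2
      = 2 * (#s * ∑ i ∈ s, Y i ^ 2 - (∑ i ∈ s, Y i) ^ 2) := by
  simp only [sub_sq, sum_add_distrib, sum_sub_distrib, sum_const, nsmul_eq_mul,
    ← mul_sum, ← sum_mul, mul_assoc]
  ring

theorem sum_sub_mean_sq (s : Finset ι) (Y : ι → ℝ) :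
    ∑ i ∈ s, (Y i - (∑ j ∈ s, Y j) / #s) ^ 2
      = ∑ i ∈ s, Y i ^ 2 - (∑ i ∈ s, Y i) ^ 2 / #s := by
  rcases s.eq_empty_or_nonempty with rfl | hs
  · simp
  have : (#s : ℝ) ≠ 0 := by exact_mod_cast hs.card_ne_zero
  simp only [sub_sq, sum_add_distrib, sum_sub_distrib, sum_const, nsmul_eq_mul, ← sum_mul,
    ← mul_sum]
  field_simp
  ring

theorem sampleVariance_eq_sum_sum_sub_sq (s : Finset ι) (Y : ι → ℝ) :
    sampleVariance s Y = (∑ i ∈ s, ∑ j ∈ s, (Y i - Y j) ^ 2) / (2 * #s * (#s - 1)) := by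
  rcases s.eq_empty_or_nonempty with rfl | hs
  · simp [sampleVariance]
  have : (#s : ℝ) ≠ 0 := by exact_mod_cast hs.card_ne_zero
  rw [sampleVariance, sum_sub_mean_sq, sum_sum_sub_sq, mul_assoc, ← div_div, ← div_div,
    mul_div_cancel_left₀ _ two_ne_zero, sub_div' this, mul_comm]

variable [Fintype ι] [DecidableEq ι]

theorem sum_powersetCard_sum_sum {M : Type*} [AddCommMonoid M] {k : ℕ} (hk : 2 ≤ k)
    (f : ι → ι → M) (hf : ∀ i, f i i = 0) :
    ∑ s ∈ powersetCard k univ, ∑ i ∈ s, ∑ j ∈ s, f i j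
      = (Fintype.card ι - 2).choose (k - 2) • ∑ i, ∑ j, f i j := by
  have h_indicator : ∀ s : Finset ι, ∑ i ∈ s, ∑ j ∈ s, f i j
      = ∑ i, ∑ j, if {i, j} ⊆ s then f i j else 0 := by
    intro s
    simp only [insert_subset_iff, singleton_subset_iff, ite_and, ← ite_sum_zero, sum_ite_mem,
      univ_inter]
  rw [sum_congr rfl fun s _ => h_indicator s, sum_comm, smul_sum]
  refine sum_congr rfl fun i _ => ?_
  rw [sum_comm, smul_sum]
  refine sum_congr rfl fun j _ => ?_
  rw [← sum_filter, sum_const]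
  obtain rfl | hij := eq_or_ne i j
  · simp [hf]
  rw [card_filter_powersetCard_subset _ _ _ (subset_univ _) (by rwa [card_pair hij]),
    card_pair hij, card_univ]

theorem sum_powersetCard_compl {M : Type*} [AddCommMonoid M] {k : ℕ}
    (hk : k ≤ Fintype.card ι) (f : Finset ι → M) :
    ∑ s ∈ powersetCard k univ, f sᶜ = ∑ s ∈ powersetCard (Fintype.card ι - k) univ, f s := by
  refine sum_nbij' compl compl (fun s hs => ?_) (fun s hs => ?_) (fun s _ => compl_compl s)
    (fun s _ => compl_compl s) (fun s _ => rfl)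
  all_goals
    simp only [mem_powersetCard_univ, card_compl] at hs ⊢
    omega

theorem sum_powersetCard_sampleVariance {k : ℕ} (hk : 2 ≤ k) (hkn : k ≤ Fintype.card ι)
    (Y : ι → ℝ) :
    (∑ s ∈ powersetCard k univ, sampleVariance s Y) / (Fintype.card ι).choose k
      = sampleVariance univ Y := by
  set n := Fintype.card ι
  have hchoose :
      (n.choose k : ℝ) * (k * (k - 1)) = (n - 2).choose (k - 2) * (n * (n - 1)) := by
    have := congrArg (Nat.cast (R := ℝ)) (Nat.choose_mul_mul_sub_one hk hkn)
    push_cast [Nat.cast_sub (by omega : 1 ≤ k), Nat.cast_sub (by omega : 1 ≤ n)] at this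
    exact this
  have hsum : ∑ s ∈ powersetCard k univ, sampleVariance s Y
      = (n - 2).choose (k - 2) * (∑ i, ∑ j, (Y i - Y j) ^ 2) / (2 * k * (k - 1)) := by
    rw [sum_congr rfl fun s hs => by
        rw [sampleVariance_eq_sum_sum_sub_sq, mem_powersetCard_univ.1 hs], ← sum_div,
      sum_powersetCard_sum_sum hk _ (by simp), nsmul_eq_mul]
  have hk1 : (k : ℝ) - 1 ≠ 0 := by
    rw [sub_ne_zero]; exact_mod_cast (by omega : k ≠ 1)
  have hn0 : (n : ℝ) ≠ 0 := by exact_mod_cast (by omega : n ≠ 0)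
  have hn1 : (n : ℝ) - 1 ≠ 0 := by
    rw [sub_ne_zero]; exact_mod_cast (by omega : n ≠ 1)
  have hC : (n.choose k : ℝ) ≠ 0 := by exact_mod_cast (Nat.choose_pos hkn).ne'
  rw [hsum, sampleVariance_eq_sum_sum_sub_sq, card_univ, div_div,
    div_eq_div_iff (by positivity) (by positivity)]
  linear_combination (-2 * ∑ i, ∑ j, (Y i - Y j) ^ 2) * hchoose

end

theorem Finset.decide_mem_injective {α : Type*} [DecidableEq α] :
    Function.Injective fun (s : Finset α) (a : α) => decide (a ∈ s) :=
  fun s t h => by ext a; simpa using congrFun h a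

theorem CRD_eq_map (N N₁ : ℕ) :
    CRD N N₁ = (powersetCard N₁ univ).map ⟨_, Finset.decide_mem_injective⟩ := by
  ext T
  simp only [CRD, mem_filter, mem_univ, true_and, mem_map, mem_powersetCard_univ]
  constructor
  · intro hT
    exact ⟨_, hT, funext fun i => by simp⟩
  · rintro ⟨s, rfl, rfl⟩
    simp

theorem crdExp_eq_sum_powersetCard (N N₁ : ℕ) (g : (Fin N → Bool) → ℝ) :
    crdExp N N₁ g
      = (∑ s ∈ powersetCard N₁ univ, g fun i => decide (i ∈ s)) / N.choose N₁ := by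
  rw [crdExp, CRD_eq_map, sum_map, card_map, card_powersetCard, card_univ, Fintype.card_fin]
  rfl

theorem s1sq_decide_mem {N N₁ : ℕ} (Y1 : Fin N → ℝ) {s : Finset (Fin N)} (hs : #s = N₁) :
    s1sq N N₁ Y1 (fun i => decide (i ∈ s)) = sampleVariance s Y1 := by
  subst hs
  simp only [s1sq, ybar1obs, sampleVariance, decide_eq_true_eq, sum_ite_mem, univ_inter]

theorem s0sq_decide_mem {N N₁ : ℕ} (Y0 : Fin N → ℝ) {s : Finset (Fin N)} (hs : #s = N₁) :
    s0sq N N₁ Y0 (fun i => decide (i ∈ s)) = sampleVariance sᶜ Y0 := by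
  subst hs
  have h_compl (g : Fin N → ℝ) : ∑ i, (if i ∈ s then 0 else g i) = ∑ i ∈ sᶜ, g i := by
    rw [← univ_inter sᶜ, ← sum_ite_mem]
    simp only [mem_compl, ite_not]
  simp only [s0sq, ybar0obs, sampleVariance, decide_eq_true_eq, h_compl, card_compl,
    Fintype.card_fin]

/-- In a completely randomized experiment with `2 ≤ N₁ ≤ N−2`,
the within-group sample variances are unbiased for the corresponding finite
population variances: `E[s_t²] = S_t²` for `t = 1` and `t = 0`. -/
theorem stmt5 (N N₁ : ℕ) (h1 : 2 ≤ N₁) (h2 : N₁ ≤ N - 2) (Y1 Y0 : Fin N → ℝ) :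
    crdExp N N₁ (s1sq N N₁ Y1)
      = (∑ i, (Y1 i - (∑ j, Y1 j) / (N : ℝ)) ^ 2) / ((N : ℝ) - 1) ∧
    crdExp N N₁ (s0sq N N₁ Y0)
      = (∑ i, (Y0 i - (∑ j, Y0 j) / (N : ℝ)) ^ 2) / ((N : ℝ) - 1) := by
  have hpop (Y : Fin N → ℝ) : sampleVariance univ Y
      = (∑ i, (Y i - (∑ j, Y j) / (N : ℝ)) ^ 2) / ((N : ℝ) - 1) := by
    simp only [sampleVariance, card_univ, Fintype.card_fin]
  have hN : N₁ ≤ Fintype.card (Fin N) := by rw [Fintype.card_fin]; omega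
  refine ⟨?_, ?_⟩
  · rw [crdExp_eq_sum_powersetCard,
      sum_congr rfl fun s hs => s1sq_decide_mem Y1 (mem_powersetCard_univ.1 hs), ← hpop]
    simpa only [Fintype.card_fin] using sum_powersetCard_sampleVariance h1 hN Y1
  · rw [crdExp_eq_sum_powersetCard,
      sum_congr rfl fun s hs => s0sq_decide_mem Y0 (mem_powersetCard_univ.1 hs),
      sum_powersetCard_compl (f := (sampleVariance · Y0)) hN, ← Nat.choose_symm (by omega),
      ← hpop]
    simpa only [Fintype.card_fin] using
      sum_powersetCard_sampleVariance (by simp only [Fintype.card_fin]; omega) (Nat.sub_le _ _) Y0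
end
end

section
/- With binary regressor T_i ∈ {0,1}, T̄ = N₁/N, OLS residuals ε̂_i as above, the Huber–White heteroskedasticity-robust variance estimator satisfies the exact identity V̂_{HW} = Σ_{i=1}^N ε̂_i²(T_i − T̄)² / {Σ_{i=1}^N (T_i − T̄)²}² = (s₁²/N₁)·((N₁−1)/N₁) + (s₀²/N₀)·((N₀−1)/N₀), where s_t² is the sample variance of Y_i^{obs} in group t with denominator N_t − 1. -/
open Finset

/-!
With a binary regressor, `Tᵢ - T̄` takes only the two values `N₀/N` (treated) and `-N₁/N`
(control). Hence `Σ (Tᵢ - T̄)² = N₁N₀/N`, the weighted residual sum splits into the two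
within-group sums of squares `S₁, S₀` with weights `(N₀/N)²` and `(N₁/N)²`, and the ratio
collapses to `S₁/N₁² + S₀/N₀²`; each term equals `(s_t²/N_t)·((N_t-1)/N_t)`.
-/

section BinaryRegressor

variable {ι : Type*} [Fintype ι] [DecidableEq ι] (A : Finset ι)

lemma sum_sq_sub_ite_mul_sq_indicator_sub (y : ι → ℝ) (c₁ c₀ t : ℝ) :
    ∑ i, (y i - if i ∈ A then c₁ else c₀) ^ 2 * ((if i ∈ A then (1 : ℝ) else 0) - t) ^ 2
      = (1 - t) ^ 2 * ∑ i ∈ A, (y i - c₁) ^ 2 + t ^ 2 * ∑ i ∈ Aᶜ, (y i - c₀) ^ 2 := by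
  rw [← sum_add_sum_compl A, mul_sum, mul_sum]
  congr 1 <;> refine sum_congr rfl fun i hi => ?_
  · simp only [hi, if_true]
    ring
  · simp only [mem_compl.1 hi, if_false]
    ring

lemma sum_sq_indicator_sub (t : ℝ) :
    ∑ i, ((if i ∈ A then (1 : ℝ) else 0) - t) ^ 2 = #A * (1 - t) ^ 2 + #Aᶜ * t ^ 2 := by
  rw [← sum_add_sum_compl A]
  have h₁ : ∑ i ∈ A, ((if i ∈ A then (1 : ℝ) else 0) - t) ^ 2 = ∑ _i ∈ A, (1 - t) ^ 2 :=
    sum_congr rfl fun i hi => by rw [if_pos hi]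
  have h₀ : ∑ i ∈ Aᶜ, ((if i ∈ A then (1 : ℝ) else 0) - t) ^ 2 = ∑ _i ∈ Aᶜ, t ^ 2 :=
    sum_congr rfl fun i hi => by rw [if_neg (mem_compl.1 hi)]; ring
  rw [h₁, h₀, sum_const, sum_const, nsmul_eq_mul, nsmul_eq_mul]

end BinaryRegressor

lemma sampleVar_div_mul_eq (S n : ℝ) (hn : n ≠ 1) :
    S / (n - 1) / n * ((n - 1) / n) = S / n ^ 2 := by
  have : n - 1 ≠ 0 := sub_ne_zero.2 hn
  field_simp

lemma huberWhite_binary_eq (S₁ S₀ n₁ n₀ t : ℝ) (h₁ : n₁ ≠ 0) (h₀ : n₀ ≠ 0) (hn : n₁ + n₀ ≠ 0)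
    (ht : t = n₁ / (n₁ + n₀)) :
    ((1 - t) ^ 2 * S₁ + t ^ 2 * S₀) / (n₁ * (1 - t) ^ 2 + n₀ * t ^ 2) ^ 2
      = S₁ / n₁ ^ 2 + S₀ / n₀ ^ 2 := by
  have h1t : 1 - t = n₀ / (n₁ + n₀) := by rw [ht]; field_simp; ring
  have hden : n₁ * (1 - t) ^ 2 + n₀ * t ^ 2 = n₁ * n₀ / (n₁ + n₀) := by
    rw [h1t, ht]; field_simp; ring
  rw [hden, h1t, ht]
  field_simp

theorem stmt13_general (N N₁ N₀ : ℕ) (A : Finset (Fin N)) (hA : A.card = N₁)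
    (h1 : 2 ≤ N₁) (hN₀ : N₀ = N - N₁) (h0 : 2 ≤ N₀) (y : Fin N → ℝ)
    (ybar1 ybar0 s1sq s0sq Tbar : ℝ)
    (hs1 : s1sq = (∑ i ∈ A, (y i - ybar1) ^ 2) / ((N₁ : ℝ) - 1))
    (hs0 : s0sq = (∑ i ∈ Aᶜ, (y i - ybar0) ^ 2) / ((N₀ : ℝ) - 1))
    (hTbar : Tbar = (N₁ : ℝ) / (N : ℝ)) :
    (∑ i, (y i - if i ∈ A then ybar1 else ybar0) ^ 2
        * ((if i ∈ A then (1 : ℝ) else 0) - Tbar) ^ 2)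
      / (∑ i, ((if i ∈ A then (1 : ℝ) else 0) - Tbar) ^ 2) ^ 2
      = s1sq / (N₁ : ℝ) * (((N₁ : ℝ) - 1) / (N₁ : ℝ))
        + s0sq / (N₀ : ℝ) * (((N₀ : ℝ) - 1) / (N₀ : ℝ)) := by
  have hAc : #Aᶜ = N₀ := by simp [card_compl, hA, hN₀]
  have hN : (N : ℝ) = N₁ + N₀ := by
    have := A.card_le_univ
    simp only [Fintype.card_fin, hA] at this
    exact_mod_cast (by omega : N = N₁ + N₀)
  have hN₁ : (N₁ : ℝ) ≠ 1 := by exact_mod_cast (by omega : N₁ ≠ 1)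
  have hN₀' : (N₀ : ℝ) ≠ 1 := by exact_mod_cast (by omega : N₀ ≠ 1)
  rw [sum_sq_sub_ite_mul_sq_indicator_sub, sum_sq_indicator_sub, hA, hAc, hTbar, hN,
    huberWhite_binary_eq _ _ _ _ _ (by positivity) (by positivity) (by positivity) rfl,
    hs1, hs0, sampleVar_div_mul_eq _ _ hN₁, sampleVar_div_mul_eq _ _ hN₀']

/-- With a binary regressor (treated set `A`, `N₁ ≥ 2` treated and
`N₀ ≥ 2` control units), `T̄ = N₁/N`, and OLS residuals `ε̂ᵢ`, the Huber–White
heteroskedasticity-robust variance estimator satisfies the exact identity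
`V̂_HW = Σ ε̂ᵢ²(Tᵢ − T̄)² / {Σ (Tᵢ − T̄)²}²
      = (s₁²/N₁)((N₁−1)/N₁) + (s₀²/N₀)((N₀−1)/N₀)`. -/
theorem stmt13 (N N₁ N₀ : ℕ) (A : Finset (Fin N)) (hA : A.card = N₁)
    (h1 : 2 ≤ N₁) (hN₀ : N₀ = N - N₁) (h0 : 2 ≤ N₀) (y : Fin N → ℝ)
    (ybar1 ybar0 s1sq s0sq Tbar : ℝ)
    (hybar1 : ybar1 = (∑ i ∈ A, y i) / (N₁ : ℝ))
    (hybar0 : ybar0 = (∑ i ∈ Aᶜ, y i) / (N₀ : ℝ))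
    (hs1 : s1sq = (∑ i ∈ A, (y i - ybar1) ^ 2) / ((N₁ : ℝ) - 1))
    (hs0 : s0sq = (∑ i ∈ Aᶜ, (y i - ybar0) ^ 2) / ((N₀ : ℝ) - 1))
    (hTbar : Tbar = (N₁ : ℝ) / (N : ℝ)) :
    (∑ i, (y i - if i ∈ A then ybar1 else ybar0) ^ 2
        * ((if i ∈ A then (1 : ℝ) else 0) - Tbar) ^ 2)
      / (∑ i, ((if i ∈ A then (1 : ℝ) else 0) - Tbar) ^ 2) ^ 2
      = s1sq / (N₁ : ℝ) * (((N₁ : ℝ) - 1) / (N₁ : ℝ))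
        + s0sq / (N₀ : ℝ) * (((N₀ : ℝ) - 1) / (N₀ : ℝ)) :=
  stmt13_general N N₁ N₀ A hA h1 hN₀ h0 y ybar1 ybar0 s1sq s0sq Tbar hs1 hs0 hTbar
end

section
/- Consider a 2^K factorial experiment with N = r·2^K units (r ≥ 2), where the assignment W is drawn uniformly from all ways of assigning the N units to the J = 2^K treatment combinations z ∈ {+1,−1}^K with exactly r units per combination. Under Fisher's sharp null hypothesis the outcome of unit i is a fixed constant y_i regardless of assignment. Let Ȳ^{obs}(z) be the mean of y_i over the r units assigned to z, let g₁(z) = z₁, and let τ̂₁(W, Y^{obs}) = 2^{−(K−1)} Σ_{z ∈ {+1,−1}^K} g₁(z) Ȳ^{obs}(z). Then E[τ̂₁(W, Y^{obs})] = 0 and Var[τ̂₁(W, Y^{obs})] = J s² / (2^{2(K−1)} r), where s² = (1/(N−1))Σ_{i=1}^N (y_i − ȳ)² and ȳ = (1/N)Σ_{i=1}^N y_i. -/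
open Finset

noncomputable section

/-- The set of completely randomized `2^K` factorial assignments of `N` units:
functions from units to treatment combinations `z ∈ {+1,−1}^K` (encoded as
`Fin K → Bool`) with every combination received by exactly `r` units. -/
def FactDesign (N K r : ℕ) : Finset (Fin N → (Fin K → Bool)) :=
  Finset.univ.filter fun W => ∀ z : Fin K → Bool,
    (Finset.univ.filter fun i => W i = z).card = r

/-- Expectation over the uniform distribution on `FactDesign N K r`. -/
noncomputable def factExp (N K r : ℕ) (f : (Fin N → (Fin K → Bool)) → ℝ) : ℝ :=
  (∑ W ∈ FactDesign N K r, f W) / ((FactDesign N K r).card : ℝ)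

/-- Variance over the uniform distribution on `FactDesign N K r`. -/
noncomputable def factVar (N K r : ℕ) (f : (Fin N → (Fin K → Bool)) → ℝ) : ℝ :=
  factExp N K r fun W => (f W - factExp N K r f) ^ 2

/-- The estimated main effect of factor 1 under Fisher's sharp null (fixed
outcomes `y`): `τ̂₁(W, Yobs) = 2^{−(K−1)} Σ_z g₁(z) Ȳobs(z)` with `g₁(z) = z₁`
and `Ȳobs(z)` the mean outcome of the `r` units assigned to `z`. -/
noncomputable def tauhatFact (N K r : ℕ) (hK : 0 < K) (y : Fin N → ℝ)
    (W : Fin N → (Fin K → Bool)) : ℝ :=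
  ((2 : ℝ) ^ (K - 1))⁻¹ * ∑ z : Fin K → Bool,
    (if z ⟨0, hK⟩ then (1 : ℝ) else -1)
      * ((∑ i, if W i = z then y i else 0) / (r : ℝ))

/-!
Writing `c = g₁`, the estimator is `τ̂₁(W) = (2^(K-1) r)⁻¹ ∑ᵢ c(W i) yᵢ`. Every
assignment is balanced, `∑ᵢ c(W i) = 0`, and the design is invariant under permuting units.
Exchangeability makes `E[c(W i)]` independent of `i`, so balance forces it to vanish;
likewise `E[c(W i) c(W j)]` is the same for all `j ≠ i`, and multiplying the balance identity
by `c(W i)` (with `c² = 1`) gives `(N - 1) E[c(W i) c(W j)] = -1`. The variance is therefore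
the quadratic form with diagonal `1` and off-diagonal `-1/(N-1)` in the centred outcomes,
i.e. `N/(N-1) ∑ᵢ (yᵢ - ȳ)²` up to the factor `(2^(K-1) r)⁻²`.
-/

open Equiv

section Exchangeable

variable {α : Type*} {N : ℕ}

def IsExchangeable (D : Finset (Fin N → α)) : Prop :=
  ∀ σ : Perm (Fin N), ∀ W ∈ D, W ∘ σ ∈ D

namespace IsExchangeable

variable {D : Finset (Fin N → α)}

theorem sum_comp_perm {M : Type*} [AddCommMonoid M] (hD : IsExchangeable D) (σ : Perm (Fin N))
    (F : (Fin N → α) → M) :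
    ∑ W ∈ D, F (W ∘ σ) = ∑ W ∈ D, F W :=
  sum_nbij' (· ∘ σ) (· ∘ σ.symm) (fun W hW => hD σ W hW) (fun W hW => hD σ.symm W hW)
    (fun W _ => by ext; simp) (fun W _ => by ext; simp) (fun _ _ => rfl)

theorem sum_apply_eq {M : Type*} [AddCommMonoid M] (hD : IsExchangeable D) (f : α → M)
    (i j : Fin N) :
    ∑ W ∈ D, f (W i) = ∑ W ∈ D, f (W j) := by
  simpa using (hD.sum_comp_perm (swap i j) fun W => f (W i)).symm

theorem sum_apply_apply_eq {M : Type*} [AddCommMonoid M] (hD : IsExchangeable D)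
    (g : α → α → M) {i j j' : Fin N} (hj : i ≠ j) (hj' : i ≠ j') :
    ∑ W ∈ D, g (W i) (W j) = ∑ W ∈ D, g (W i) (W j') := by
  simpa [swap_apply_of_ne_of_ne hj hj'] using
    (hD.sum_comp_perm (swap j j') fun W => g (W i) (W j)).symm

variable {u : α → ℝ}

theorem sum_apply_eq_zero (hD : IsExchangeable D) (hu : ∀ W ∈ D, ∑ i, u (W i) = 0)
    (i : Fin N) : ∑ W ∈ D, u (W i) = 0 := by
  have h : (N : ℝ) * ∑ W ∈ D, u (W i) = 0 := by
    calc (N : ℝ) * ∑ W ∈ D, u (W i) = ∑ j : Fin N, ∑ W ∈ D, u (W j) := by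
          simp [hD.sum_apply_eq u _ i]
      _ = 0 := by rw [sum_comm]; exact sum_eq_zero hu
  have hN : (N : ℝ) ≠ 0 := by exact_mod_cast (Fin.pos i).ne'
  simpa [hN] using h

theorem sub_one_mul_sum_apply_mul_apply (hD : IsExchangeable D)
    (hu : ∀ W ∈ D, ∑ i, u (W i) = 0) {i j : Fin N} (hij : i ≠ j) :
    ((N : ℝ) - 1) * ∑ W ∈ D, u (W i) * u (W j) = -∑ W ∈ D, u (W i) ^ 2 := by
  calc ((N : ℝ) - 1) * ∑ W ∈ D, u (W i) * u (W j)
      = ∑ j' ∈ univ.erase i, ∑ W ∈ D, u (W i) * u (W j') := by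
        rw [sum_congr rfl fun j' hj' =>
            (hD.sum_apply_apply_eq (u · * u ·) hij (ne_of_mem_erase hj').symm).symm,
          sum_const, card_erase_of_mem (mem_univ i), card_univ, Fintype.card_fin, nsmul_eq_mul,
          Nat.cast_pred (Fin.pos i)]
    _ = ∑ W ∈ D, u (W i) * (∑ j', u (W j') - u (W i)) := by
        rw [sum_comm]
        refine sum_congr rfl fun W _ => ?_
        rw [← mul_sum, ← sum_erase_add _ _ (mem_univ i), add_sub_cancel_right]
    _ = -∑ W ∈ D, u (W i) ^ 2 := by
        rw [← sum_neg_distrib]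
        refine sum_congr rfl fun W hW => ?_
        rw [hu W hW]; ring

theorem sub_one_mul_sum_sq (hD : IsExchangeable D) (hu : ∀ W ∈ D, ∑ i, u (W i) = 0)
    (hu₂ : ∀ a, u a ^ 2 = 1) (x : Fin N → ℝ) :
    ((N : ℝ) - 1) * ∑ W ∈ D, (∑ i, u (W i) * x i) ^ 2
      = #D * (N * ∑ i, x i ^ 2 - (∑ i, x i) ^ 2) := by
  set S := ∑ i, x i with hS
  have hdiag (i : Fin N) : ∑ W ∈ D, u (W i) ^ 2 = #D := by simp [hu₂]
  have hrow (i : Fin N) :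
      ∑ j, x j * (((N : ℝ) - 1) * ∑ W ∈ D, u (W i) * u (W j)) = #D * (N * x i - S) := by
    rw [← add_sum_erase _ _ (mem_univ i)]
    simp only [← sq]
    rw [hdiag, sum_congr rfl fun j hj => by
        rw [hD.sub_one_mul_sum_apply_mul_apply hu (ne_of_mem_erase hj).symm, hdiag], ← sum_mul]
    linear_combination -(#D : ℝ) * (add_sum_erase univ x (mem_univ i))
  calc ((N : ℝ) - 1) * ∑ W ∈ D, (∑ i, u (W i) * x i) ^ 2
      = ((N : ℝ) - 1) * ∑ i, ∑ j, x i * x j * ∑ W ∈ D, u (W i) * u (W j) := by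
        simp_rw [sq, sum_mul_sum, mul_sum]
        rw [sum_comm]
        refine sum_congr rfl fun i _ => ?_
        rw [sum_comm]
        exact sum_congr rfl fun j _ => sum_congr rfl fun W _ => by ring
    _ = ∑ i, x i * ∑ j, x j * (((N : ℝ) - 1) * ∑ W ∈ D, u (W i) * u (W j)) := by
        rw [mul_sum]
        refine sum_congr rfl fun i _ => ?_
        rw [mul_sum, mul_sum]
        exact sum_congr rfl fun j _ => by ring
    _ = ∑ i, ((#D * N) * x i ^ 2 - (#D * S) * x i) :=
        sum_congr rfl fun i _ => by rw [hrow]; ring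
    _ = #D * (N * ∑ i, x i ^ 2 - S ^ 2) := by
        rw [sum_sub_distrib, ← mul_sum, ← mul_sum, ← hS]; ring

theorem sub_one_mul_sum_sq_eq_sum_sq_sub_mean (hD : IsExchangeable D)
    (hu : ∀ W ∈ D, ∑ i, u (W i) = 0) (hu₂ : ∀ a, u a ^ 2 = 1) (y : Fin N → ℝ) :
    ((N : ℝ) - 1) * ∑ W ∈ D, (∑ i, u (W i) * y i) ^ 2
      = #D * N * ∑ i, (y i - (∑ j, y j) / N) ^ 2 := by
  set x := fun i => y i - (∑ j, y j) / N
  have hx : ∑ i, x i = 0 := by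
    rcases N.eq_zero_or_pos with rfl | hN
    · simp
    · have hN0 : (N : ℝ) ≠ 0 := by positivity
      simp [x, sum_sub_distrib, mul_div_cancel₀ _ hN0]
  have hcentre (W) (hW : W ∈ D) : ∑ i, u (W i) * y i = ∑ i, u (W i) * x i := by
    simp [x, mul_sub, sum_sub_distrib, ← sum_mul, hu W hW]
  rw [sum_congr rfl fun W hW => by rw [hcentre W hW], hD.sub_one_mul_sum_sq hu hu₂, hx]
  ring

end IsExchangeable

end Exchangeable

section Factorial

/-- `contrast k z = z_k ∈ {+1, -1}`, reading `true` as `+1`. -/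
def contrast {ι : Type*} (k : ι) (z : ι → Bool) : ℝ := if z k then 1 else -1

theorem contrast_sq {ι : Type*} (k : ι) (z : ι → Bool) : contrast k z ^ 2 = 1 := by
  unfold contrast; split_ifs <;> norm_num

theorem sum_contrast {ι : Type*} [Fintype ι] [DecidableEq ι] (k : ι) :
    ∑ z : ι → Bool, contrast k z = 0 := by
  rw [Fintype.sum_equiv (funSplitAt k Bool) _ (fun p => contrast k fun _ => p.1)
    (by simp [contrast]), Fintype.sum_prod_type]
  simp [contrast]

variable {N K r : ℕ}

theorem factDesign_isExchangeable : IsExchangeable (FactDesign N K r) := by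
  intro σ W hW
  simp only [FactDesign, mem_filter, mem_univ, true_and] at hW ⊢
  intro z
  rw [← hW z]
  exact card_equiv σ (by simp)

theorem factDesign_nonempty (hN : N = r * 2 ^ K) : (FactDesign N K r).Nonempty := by
  let e : Fin N ≃ Fin r × (Fin K → Bool) := Fintype.equivOfCardEq (by simp [hN])
  refine ⟨fun i => (e i).2, ?_⟩
  simp only [FactDesign, mem_filter, mem_univ, true_and]
  intro z
  rw [card_equiv e (t := univ ×ˢ {z}) fun i => by
    simp only [mem_filter, mem_product, mem_univ, mem_singleton, true_and]]
  simp

theorem sum_contrast_apply_eq_zero (k : Fin K) {W : Fin N → Fin K → Bool}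
    (hW : W ∈ FactDesign N K r) : ∑ i, contrast k (W i) = 0 := by
  simp only [FactDesign, mem_filter, mem_univ, true_and] at hW
  rw [← sum_fiberwise' univ W (contrast k)]
  simp [hW, ← mul_sum, sum_contrast]

theorem tauhatFact_eq (hK : 0 < K) (y : Fin N → ℝ) (W : Fin N → Fin K → Bool) :
    tauhatFact N K r hK y W
      = ((2 : ℝ) ^ (K - 1) * r)⁻¹ * ∑ i, contrast ⟨0, hK⟩ (W i) * y i := by
  rw [tauhatFact, mul_inv, mul_assoc]
  congr 1
  rw [← Finset.sum_fiberwise univ W fun i => contrast ⟨0, hK⟩ (W i) * y i, mul_sum]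
  refine sum_congr rfl fun z _ => ?_
  rw [sum_filter, div_eq_inv_mul, mul_left_comm, mul_sum]
  congr 1
  refine sum_congr rfl fun i _ => ?_
  by_cases h : W i = z <;> simp [h, contrast]

theorem factExp_tauhatFact (hK : 0 < K) (y : Fin N → ℝ) :
    factExp N K r (tauhatFact N K r hK y) = 0 := by
  rw [factExp, sum_congr rfl fun W _ => tauhatFact_eq hK y W, ← mul_sum, sum_comm]
  simp_rw [← sum_mul,
    factDesign_isExchangeable.sum_apply_eq_zero fun W hW => sum_contrast_apply_eq_zero _ hW]
  simp

theorem factVar_tauhatFact (hK : 0 < K) (y : Fin N → ℝ) :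
    factVar N K r (tauhatFact N K r hK y)
      = ((2 : ℝ) ^ (K - 1) * r)⁻¹ ^ 2
        * (∑ W ∈ FactDesign N K r, (∑ i, contrast ⟨0, hK⟩ (W i) * y i) ^ 2)
        / #(FactDesign N K r) := by
  simp_rw [factVar, factExp_tauhatFact, sub_zero, factExp, tauhatFact_eq, mul_pow, ← mul_sum]

end Factorial

/-- In a `2^K` factorial experiment with `N = r·2^K` units
(`r ≥ 2`) under Fisher's sharp null, `E[τ̂₁(W, Yobs)] = 0` and
`Var[τ̂₁(W, Yobs)] = J s²/(2^{2(K−1)} r)` with `J = 2^K` and `s²` the sample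
variance of all the outcomes. -/
theorem stmt18 (K r N : ℕ) (hK : 0 < K) (hr : 2 ≤ r) (hN : N = r * 2 ^ K)
    (y : Fin N → ℝ) :
    factExp N K r (tauhatFact N K r hK y) = 0 ∧
    factVar N K r (tauhatFact N K r hK y)
      = ((2 : ℝ) ^ K)
          * ((∑ i, (y i - (∑ j, y j) / (N : ℝ)) ^ 2) / ((N : ℝ) - 1))
          / ((2 : ℝ) ^ (2 * (K - 1)) * (r : ℝ)) := by
  refine ⟨factExp_tauhatFact hK y, ?_⟩
  have hN1 : (N : ℝ) - 1 ≠ 0 := by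
    have : (2 : ℝ) ≤ N := by
      exact_mod_cast hN ▸ hr.trans (Nat.le_mul_of_pos_right r (Nat.two_pow_pos K))
    linarith
  have hD0 : (#(FactDesign N K r) : ℝ) ≠ 0 := by
    exact_mod_cast (factDesign_nonempty hN).card_pos.ne'
  have hJ : (2 : ℝ) ^ K = 2 * 2 ^ (K - 1) := by rw [← pow_succ', Nat.sub_add_cancel hK]
  have hNr : (N : ℝ) = r * (2 * 2 ^ (K - 1)) := by rw [← hJ]; exact_mod_cast hN
  have hvar := (factDesign_isExchangeable (r := r)).sub_one_mul_sum_sq_eq_sum_sq_sub_mean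
    (fun W hW => sum_contrast_apply_eq_zero ⟨0, hK⟩ hW) (contrast_sq _) y
  rw [factVar_tauhatFact, eq_div_of_mul_eq hN1 ((mul_comm _ _).trans hvar), hJ,
    mul_comm 2 (K - 1), pow_mul]
  field_simp
  linear_combination (∑ i, (y i - (∑ j, y j) / (N : ℝ)) ^ 2) * hNr
end
end

section
/- For fixed real potential outcomes Y_i(1), Y_i(0), i = 1,…,N with N ≥ 2, the finite population standard deviations S₁ = √S₁², S₀ = √S₀² and the variance of individual effects S_τ² = (1/(N−1))Σ(τ_i − τ)² (with τ_i = Y_i(1) − Y_i(0) and τ the mean of the τ_i) satisfy the Cauchy–Schwarz bound S_τ² ≥ (S₁ − S₀)². Consequently, the sampling variance of the difference-in-means estimator in a completely randomized experiment satisfies Var(τ̂) = S₁²/N₁ + S₀²/N₀ − S_τ²/N ≤ (N₀/(N₁N))S₁² + (N₁/(N₀N))S₀² + 2S₁S₀/N. -/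
open Finset

set_option maxHeartbeats 1000000 in
/-- For fixed potential outcomes with finite population variances
`S₁², S₀²` (standard deviations `S₁ = √S₁²`, `S₀ = √S₀²`) and variance of
individual effects `S_τ²`, the Cauchy–Schwarz bound `S_τ² ≥ (S₁ − S₀)²` holds;
consequently the sampling variance of the difference-in-means estimator
satisfies `Var(τ̂) = S₁²/N₁ + S₀²/N₀ − S_τ²/N
≤ (N₀/(N₁N))S₁² + (N₁/(N₀N))S₀² + 2S₁S₀/N`. -/
theorem stmt19 (N N₁ N₀ : ℕ) (hN : 2 ≤ N) (h1 : 1 ≤ N₁) (h2 : N₁ ≤ N - 1)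
    (hN₀ : N₀ = N - N₁) (Y1 Y0 : Fin N → ℝ) (S1sq S0sq Stausq : ℝ)
    (hS1 : S1sq = (∑ i, (Y1 i - (∑ j, Y1 j) / (N : ℝ)) ^ 2) / ((N : ℝ) - 1))
    (hS0 : S0sq = (∑ i, (Y0 i - (∑ j, Y0 j) / (N : ℝ)) ^ 2) / ((N : ℝ) - 1))
    (hStau : Stausq
      = (∑ i, ((Y1 i - Y0 i) - (∑ j, (Y1 j - Y0 j)) / (N : ℝ)) ^ 2)
          / ((N : ℝ) - 1)) :
    Stausq ≥ (Real.sqrt S1sq - Real.sqrt S0sq) ^ 2 ∧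
    S1sq / (N₁ : ℝ) + S0sq / (N₀ : ℝ) - Stausq / (N : ℝ)
      ≤ ((N₀ : ℝ) / ((N₁ : ℝ) * (N : ℝ))) * S1sq
        + ((N₁ : ℝ) / ((N₀ : ℝ) * (N : ℝ))) * S0sq
        + 2 * Real.sqrt S1sq * Real.sqrt S0sq / (N : ℝ) := by
  have hNle : N₁ ≤ N := by omega
  have hN0ge : 1 ≤ N₀ := by omega
  have hNR : (2:ℝ) ≤ (N:ℝ) := by exact_mod_cast hN
  have hn : (0:ℝ) < (N:ℝ) - 1 := by linarith
  have hN1R : (1:ℝ) ≤ (N₁:ℝ) := by exact_mod_cast h1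
  have hN0R : (1:ℝ) ≤ (N₀:ℝ) := by exact_mod_cast hN0ge
  have hcast : (N₀:ℝ) = (N:ℝ) - (N₁:ℝ) := by
    rw [hN₀]; push_cast [Nat.cast_sub hNle]; ring
  set a : Fin N → ℝ := fun i => Y1 i - (∑ j, Y1 j) / (N:ℝ) with ha
  set b : Fin N → ℝ := fun i => Y0 i - (∑ j, Y0 j) / (N:ℝ) with hb
  have hdiff : ∀ i, (Y1 i - Y0 i) - (∑ j, (Y1 j - Y0 j)) / (N:ℝ) = a i - b i := by
    intro i
    simp only [ha, hb, Finset.sum_sub_distrib]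
    ring
  have hT : Stausq = (∑ i, (a i - b i) ^ 2) / ((N:ℝ) - 1) := by
    rw [hStau]
    congr 1
    exact Finset.sum_congr rfl fun i _ => by rw [hdiff]
  set A := ∑ i, (a i) ^ 2 with hAdef
  set B := ∑ i, (b i) ^ 2 with hBdef
  set C := ∑ i, a i * b i with hCdef
  have hA0 : 0 ≤ A := by positivity
  have hB0 : 0 ≤ B := by positivity
  have hexp : (∑ i, (a i - b i) ^ 2) = A + B - 2 * C := by
    calc (∑ i, (a i - b i) ^ 2)
        = ∑ i, ((a i) ^ 2 + (b i) ^ 2 - 2 * (a i * b i)) :=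
          Finset.sum_congr rfl fun i _ => by ring
      _ = A + B - 2 * C := by
          rw [hAdef, hBdef, hCdef, Finset.mul_sum, Finset.sum_sub_distrib,
            Finset.sum_add_distrib]
  have hCS : C ≤ Real.sqrt A * Real.sqrt B := by
    have h := Finset.sum_mul_sq_le_sq_mul_sq Finset.univ a b
    calc C ≤ |C| := le_abs_self _
      _ = Real.sqrt (C ^ 2) := (Real.sqrt_sq_eq_abs _).symm
      _ ≤ Real.sqrt (A * B) := Real.sqrt_le_sqrt h
      _ = Real.sqrt A * Real.sqrt B := Real.sqrt_mul hA0 _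
  set s1 := Real.sqrt S1sq with hs1def
  set s0 := Real.sqrt S0sq with hs0def
  have hS1' : S1sq = A / ((N:ℝ) - 1) := hS1
  have hS0' : S0sq = B / ((N:ℝ) - 1) := hS0
  have hs1sq : s1 ^ 2 = S1sq := Real.sq_sqrt (by rw [hS1']; positivity)
  have hs0sq : s0 ^ 2 = S0sq := Real.sq_sqrt (by rw [hS0']; positivity)
  have hmul : s1 * s0 = Real.sqrt A * Real.sqrt B / ((N:ℝ) - 1) := by
    rw [hs1def, hs0def, hS1', hS0', Real.sqrt_div hA0, Real.sqrt_div hB0]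
    rw [div_mul_div_comm, Real.mul_self_sqrt hn.le]
  have key : Stausq ≥ (s1 - s0) ^ 2 := by
    have h1' : Stausq = S1sq + S0sq - 2 * C / ((N:ℝ) - 1) := by
      rw [hT, hexp, hS1', hS0']; ring
    have h2' : 2 * C / ((N:ℝ) - 1) ≤ 2 * (s1 * s0) := by
      rw [hmul, mul_div_assoc]
      gcongr
    nlinarith [hs1sq, hs0sq]
  refine ⟨key, ?_⟩
  have hN1ne : (N₁:ℝ) ≠ 0 := by linarith
  have hN0ne : (N₀:ℝ) ≠ 0 := by linarith
  have hNne : (N:ℝ) ≠ 0 := by linarith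
  have halg : S1sq / (N₁:ℝ) + S0sq / (N₀:ℝ) - (s1 - s0) ^ 2 / (N:ℝ)
      = ((N₀:ℝ) / ((N₁:ℝ) * (N:ℝ))) * S1sq
        + ((N₁:ℝ) / ((N₀:ℝ) * (N:ℝ))) * S0sq
        + 2 * s1 * s0 / (N:ℝ) := by
    have e1 : (s1 - s0) ^ 2 = S1sq + S0sq - 2 * s1 * s0 := by
      rw [sub_sq]; linarith [hs1sq, hs0sq]
    have hNN1ne : (N:ℝ) - (N₁:ℝ) ≠ 0 := by rw [← hcast]; exact hN0ne
    rw [e1, hcast]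
    field_simp
    ring
  have hmono : (s1 - s0) ^ 2 / (N:ℝ) ≤ Stausq / (N:ℝ) :=
    (div_le_div_iff_of_pos_right (by linarith : (0:ℝ) < (N:ℝ))).mpr key
  linarith [halg]
end
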